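/- arXiv:1905.07887 — 2 statements merged into one kernel-verified Lean document; each statement's English description precedes it below -/
import Mathlib

section
/- Let H and K be holomorphic functions on a disk centered at 0, with H(0) = d > 0 real and K(0) = i. Suppose for all w in a punctured neighborhood of 0 the identity Im(H(w))·((Re K(w))² − |w|²(Im K(w))²) + 2·Re(H(w))·|w|·Re(K(w))·Im(K(w)) = 0 holds. Then Re(K(w)) = 0 and Im(H(w)) = 0 identically near 0. -/
/-!
Unless `K ≡ i` (when the identity reduces to `Im H · |w|² = 0`), write `K = i + wⁿ A` with
`A(0) ≠ 0`, and `H = d + wᵐ B` with `B(0) ≠ 0` (or `B = 0`, `m = n` if `H ≡ d`). On the ray `w = εζ`,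
`|ζ| = 1`, the identity reads `-ε^(m+2) Im(ζᵐ B(0)) + 2d ε^(n+1) Re(ζⁿ A(0)) + (higher order) = 0`,
so the coefficient of the lowest power of `ε` vanishes for every `ζ`. Since `ζ ↦ ζᵏ c` sweeps out
the whole circle of radius `|c|`, this forces `A(0) = 0` or `B(0) = 0`, a contradiction.
-/

open Metric Set

open Complex Filter Topology

def linesOfCurvatureForm (h k : ℂ) (r : ℝ) : ℝ :=
  h.im * (k.re ^ 2 - r ^ 2 * k.im ^ 2) + 2 * h.re * (r * k.re * k.im)

theorem eq_zero_of_forall_re_pow_mul_eq_zero {k : ℕ} (hk : k ≠ 0) {c : ℂ}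
    (h : ∀ ζ : ℂ, ‖ζ‖ = 1 → (ζ ^ k * c).re = 0) : c = 0 := by
  have hrot : exp (↑(-arg c / k) * I) ^ k * c = ‖c‖ := by
    rw [← exp_nat_mul, ← norm_mul_exp_arg_mul_I c, mul_left_comm, ← exp_add]
    push_cast
    field_simp
    simp
  have := h _ (norm_exp_ofReal_mul_I (-arg c / k))
  rwa [hrot, ofReal_re, norm_eq_zero] at this

theorem eq_zero_of_forall_im_pow_mul_eq_zero {k : ℕ} (hk : k ≠ 0) {c : ℂ}
    (h : ∀ ζ : ℂ, ‖ζ‖ = 1 → (ζ ^ k * c).im = 0) : c = 0 := by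
  have : -I * c = 0 := eq_zero_of_forall_re_pow_mul_eq_zero hk fun ζ hζ => by
    rw [mul_left_comm, neg_mul, neg_re, I_mul_re, neg_neg, h ζ hζ]
  simpa using this

theorem AnalyticAt.exists_eventually_eq_add_pow_mul {𝕜 : Type*} [NontriviallyNormedField 𝕜]
    {f : 𝕜 → 𝕜} {z₀ : 𝕜} (hf : AnalyticAt 𝕜 f z₀) (hne : ¬∀ᶠ z in 𝓝 z₀, f z = f z₀) :
    ∃ n ≠ 0, ∃ g : 𝕜 → 𝕜, AnalyticAt 𝕜 g z₀ ∧ g z₀ ≠ 0 ∧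
      ∀ᶠ z in 𝓝 z₀, f z = f z₀ + (z - z₀) ^ n * g z := by
  obtain ⟨n, g, hg, hg0, hfg⟩ :=
    (hf.sub (analyticAt_const (v := f z₀))).exists_eventuallyEq_pow_smul_nonzero_iff.mpr
      (by simpa only [Pi.sub_apply, sub_eq_zero] using hne)
  refine ⟨n, ?_, g, hg, hg0, hfg.mono fun z hz => ?_⟩
  · rintro rfl
    exact hg0 (by simpa [eq_comm] using hfg.self_of_nhds)
  · rw [← sub_eq_iff_eq_add', ← smul_eq_mul, ← hz, Pi.sub_apply]

theorem eq_zero_of_eventually_pow_mul_eq_zero {g : ℝ → ℝ} {p : ℕ}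
    (hg : ContinuousWithinAt g (Ioi 0) 0) (h : ∀ᶠ ε in 𝓝[>] 0, ε ^ p * g ε = 0) : g 0 = 0 := by
  have hg0 : ∀ᶠ ε in 𝓝[>] 0, g ε = 0 := by
    filter_upwards [h, self_mem_nhdsWithin] with ε hε hεpos
    exact (mul_eq_zero.mp hε).resolve_left (pow_ne_zero _ (ne_of_gt hεpos))
  exact tendsto_nhds_unique hg.tendsto (tendsto_const_nhds.congr' (hg0.mono fun _ h => h.symm))

theorem linesOfCurvatureForm_add_pow_mul (d ε : ℝ) (a b : ℂ) {n m p : ℕ}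
    (hpn : p ≤ n + 1) (hpm : p ≤ m + 2) (hp : p ≤ m + 2 * n) :
    linesOfCurvatureForm (d + (ε : ℂ) ^ m * b) (I + (ε : ℂ) ^ n * a) ε =
      ε ^ p * (ε ^ (m + 2 * n - p) * b.im * a.re ^ 2
        - ε ^ (m + 2 - p) * b.im * (1 + ε ^ n * a.im) ^ 2
        + 2 * (d + ε ^ m * b.re) * (ε ^ (n + 1 - p) * a.re * (1 + ε ^ n * a.im))) := by
  have e1 := pow_sub_mul_pow ε hp
  have e2 := pow_sub_mul_pow ε hpm
  have e3 := pow_sub_mul_pow ε hpn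
  simp only [linesOfCurvatureForm, ← ofReal_pow, add_re, add_im, ofReal_re, ofReal_im,
    re_ofReal_mul, im_ofReal_mul, I_re, I_im]
  linear_combination -(b.im * a.re ^ 2) * e1 + (b.im * (1 + ε ^ n * a.im) ^ 2) * e2
    - (2 * (d + ε ^ m * b.re) * a.re * (1 + ε ^ n * a.im)) * e3

/-- For `p = min (n + 1) (m + 2)`, the factors `0 ^ (m + 2 - p)` and `0 ^ (n + 1 - p)` keep exactly
the terms of order `ε ^ p`. -/
theorem leading_coeff_eq_of_linesOfCurvatureForm_eq_zero {a b : ℝ → ℂ} {d : ℝ} {n m p : ℕ}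
    (hn : n ≠ 0) (hm : m ≠ 0) (hpn : p ≤ n + 1) (hpm : p ≤ m + 2) (hp : p < m + 2 * n)
    (ha : ContinuousAt a 0) (hb : ContinuousAt b 0)
    (h : ∀ᶠ ε : ℝ in 𝓝[>] 0,
      linesOfCurvatureForm (d + (ε : ℂ) ^ m * b ε) (I + (ε : ℂ) ^ n * a ε) ε = 0) :
    (0 : ℝ) ^ (m + 2 - p) * (b 0).im = 2 * d * ((0 : ℝ) ^ (n + 1 - p) * (a 0).re) := by
  have h0 := eq_zero_of_eventually_pow_mul_eq_zero (p := p) (by fun_prop) (h.mono fun ε hε =>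
    (linesOfCurvatureForm_add_pow_mul d ε (a ε) (b ε) hpn hpm hp.le).symm.trans hε)
  rw [zero_pow (by omega), zero_pow hn, zero_pow hm] at h0
  linear_combination -h0

theorem tendsto_ofReal_mul_nhdsGT_nhdsNE {ζ : ℂ} (hζ : ζ ≠ 0) :
    Tendsto (fun ε : ℝ => (ε : ℂ) * ζ) (𝓝[>] 0) (𝓝[≠] 0) := by
  refine tendsto_nhdsWithin_of_tendsto_nhds_of_eventually_within _ ?_ ?_
  · exact tendsto_nhdsWithin_of_tendsto_nhds
      ((by fun_prop : Continuous fun ε : ℝ => (ε : ℂ) * ζ).tendsto' 0 0 (by simp))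
  · filter_upwards [self_mem_nhdsWithin] with ε hε
    exact mul_ne_zero (ofReal_ne_zero.mpr (ne_of_gt hε)) hζ

section LeadingCoefficients

variable {H K A B : ℂ → ℂ} {d : ℝ} {n m : ℕ}

theorem leading_coeff_eq_of_linesOfCurvatureForm_eq_zero_on_circle {p : ℕ} (hn : n ≠ 0)
    (hm : m ≠ 0) (hpn : p ≤ n + 1) (hpm : p ≤ m + 2) (hp : p < m + 2 * n)
    (hA : ContinuousAt A 0) (hB : ContinuousAt B 0)
    (hK : ∀ᶠ w in 𝓝 0, K w = I + w ^ n * A w) (hH : ∀ᶠ w in 𝓝 0, H w = d + w ^ m * B w)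
    (hid : ∀ᶠ w in 𝓝[≠] 0, linesOfCurvatureForm (H w) (K w) ‖w‖ = 0)
    {ζ : ℂ} (hζ : ‖ζ‖ = 1) :
    (0 : ℝ) ^ (m + 2 - p) * (ζ ^ m * B 0).im =
      2 * d * ((0 : ℝ) ^ (n + 1 - p) * (ζ ^ n * A 0).re) := by
  have hray := tendsto_ofReal_mul_nhdsGT_nhdsNE (norm_ne_zero_iff.mp (hζ.trans_ne one_ne_zero))
  have hcont : ContinuousAt (fun ε : ℝ => (ε : ℂ) * ζ) 0 := by fun_prop
  have := leading_coeff_eq_of_linesOfCurvatureForm_eq_zero (d := d)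
    (a := fun ε => ζ ^ n * A (ε * ζ)) (b := fun ε => ζ ^ m * B (ε * ζ)) hn hm hpn hpm hp
    (continuousAt_const.mul (hA.comp_of_eq hcont (by simp)))
    (continuousAt_const.mul (hB.comp_of_eq hcont (by simp))) ?_
  · simpa using this
  filter_upwards [hray.eventually hid, (hray.mono_right nhdsWithin_le_nhds).eventually (hK.and hH),
    self_mem_nhdsWithin] with ε hε ⟨hKε, hHε⟩ hεpos
  rw [hKε, hHε, norm_mul, hζ, norm_real, Real.norm_of_nonneg (le_of_lt hεpos), mul_one] at hε
  convert hε using 3 <;> ring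

theorem leading_coeff_eq_zero_of_le (hd : d ≠ 0) (hn : n ≠ 0) (hnm : n ≤ m)
    (hA : ContinuousAt A 0) (hB : ContinuousAt B 0)
    (hK : ∀ᶠ w in 𝓝 0, K w = I + w ^ n * A w) (hH : ∀ᶠ w in 𝓝 0, H w = d + w ^ m * B w)
    (hid : ∀ᶠ w in 𝓝[≠] 0, linesOfCurvatureForm (H w) (K w) ‖w‖ = 0) : A 0 = 0 := by
  refine eq_zero_of_forall_re_pow_mul_eq_zero hn fun ζ hζ => ?_
  have := leading_coeff_eq_of_linesOfCurvatureForm_eq_zero_on_circle (p := n + 1) hn (by omega)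
    le_rfl (by omega) (by omega) hA hB hK hH hid hζ
  rw [Nat.sub_self, pow_zero, one_mul, zero_pow (by omega), zero_mul] at this
  simpa [hd] using this.symm

theorem leading_coeff_eq_zero_of_add_two_le (hm : m ≠ 0) (hmn : m + 2 ≤ n)
    (hA : ContinuousAt A 0) (hB : ContinuousAt B 0)
    (hK : ∀ᶠ w in 𝓝 0, K w = I + w ^ n * A w) (hH : ∀ᶠ w in 𝓝 0, H w = d + w ^ m * B w)
    (hid : ∀ᶠ w in 𝓝[≠] 0, linesOfCurvatureForm (H w) (K w) ‖w‖ = 0) : B 0 = 0 := by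
  refine eq_zero_of_forall_im_pow_mul_eq_zero hm fun ζ hζ => ?_
  have := leading_coeff_eq_of_linesOfCurvatureForm_eq_zero_on_circle (p := m + 2) (by omega) hm
    (by omega) le_rfl (by omega) hA hB hK hH hid hζ
  rwa [Nat.sub_self, pow_zero, one_mul, zero_pow (by omega), zero_mul, mul_zero] at this

/-- Here the two leading terms have the same order; comparing `ζ` with `-ζ` separates them, since
their angular frequencies `m` and `m + 1` have opposite parity. -/
theorem leading_coeff_eq_zero_of_eq_add_one (hm : m ≠ 0) (hnm : n = m + 1)
    (hA : ContinuousAt A 0) (hB : ContinuousAt B 0)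
    (hK : ∀ᶠ w in 𝓝 0, K w = I + w ^ n * A w) (hH : ∀ᶠ w in 𝓝 0, H w = d + w ^ m * B w)
    (hid : ∀ᶠ w in 𝓝[≠] 0, linesOfCurvatureForm (H w) (K w) ‖w‖ = 0) : B 0 = 0 := by
  subst hnm
  have key (ζ : ℂ) (hζ : ‖ζ‖ = 1) : (ζ ^ m * B 0).im = 2 * d * (ζ ^ (m + 1) * A 0).re := by
    simpa using leading_coeff_eq_of_linesOfCurvatureForm_eq_zero_on_circle (p := m + 2)
      (by omega) hm le_rfl le_rfl (by omega) hA hB hK hH hid hζ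
  refine eq_zero_of_forall_im_pow_mul_eq_zero hm fun ζ hζ => ?_
  have hneg := key (-ζ) (by rwa [norm_neg])
  have hsign : (-ζ) ^ m = ((-1 : ℝ) ^ m : ℝ) * ζ ^ m ∧
      (-ζ) ^ (m + 1) = (-(-1 : ℝ) ^ m : ℝ) * ζ ^ (m + 1) := by
    constructor <;> push_cast <;> ring
  simp only [hsign.1, hsign.2, mul_assoc, im_ofReal_mul, re_ofReal_mul] at hneg
  have : (-1 : ℝ) ^ m * (2 * (ζ ^ m * B 0).im) = 0 := by
    linear_combination hneg + (-1 : ℝ) ^ m * key ζ hζ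
  simpa using this

theorem leading_coeff_eq_zero (hd : d ≠ 0) (hn : n ≠ 0) (hm : m ≠ 0)
    (hA : ContinuousAt A 0) (hB : ContinuousAt B 0)
    (hK : ∀ᶠ w in 𝓝 0, K w = I + w ^ n * A w) (hH : ∀ᶠ w in 𝓝 0, H w = d + w ^ m * B w)
    (hid : ∀ᶠ w in 𝓝[≠] 0, linesOfCurvatureForm (H w) (K w) ‖w‖ = 0) :
    A 0 = 0 ∨ B 0 = 0 := by
  rcases le_or_gt n m with hnm | hmn
  · exact .inl (leading_coeff_eq_zero_of_le hd hn hnm hA hB hK hH hid)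
  rcases (Nat.succ_le_of_lt hmn).eq_or_lt with hnm | hmn
  · exact .inr (leading_coeff_eq_zero_of_eq_add_one hm hnm.symm hA hB hK hH hid)
  · exact .inr (leading_coeff_eq_zero_of_add_two_le hm hmn hA hB hK hH hid)

theorem eventually_re_eq_zero_and_im_eq_zero_of_eventually_eq_I (hK : ∀ᶠ w in 𝓝 0, K w = I)
    (hH0 : (H 0).im = 0) (hid : ∀ᶠ w in 𝓝[≠] 0, linesOfCurvatureForm (H w) (K w) ‖w‖ = 0) :
    ∀ᶠ w in 𝓝 0, (K w).re = 0 ∧ (H w).im = 0 := by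
  have him : ∀ᶠ w in 𝓝[≠] 0, (H w).im = 0 := by
    filter_upwards [hid, nhdsWithin_le_nhds hK, self_mem_nhdsWithin] with w hw hKw hw0
    simpa [linesOfCurvatureForm, hKw, show w ≠ 0 from hw0] using hw
  filter_upwards [hK, eventually_nhdsWithin_iff.mp him] with w hKw hHw
  refine ⟨by simp [hKw], ?_⟩
  rcases eq_or_ne w 0 with rfl | hw
  · exact hH0
  · exact hHw hw

end LeadingCoefficients

/-- The key identity (3.12): if `H, K` are holomorphic on a disk of radius `ρ` with
`H(0)` a positive real number and `K(0) = i`, and the identity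
`Im H·((Re K)² − |w|²(Im K)²) + 2·Re H·|w|·Re K·Im K = 0` holds on a punctured
neighborhood of `0`, then `Re K = 0` and `Im H = 0` identically near `0`. -/
theorem lines_of_curvature_identity_forces_catenoid
    (H K : ℂ → ℂ) (ρ : ℝ) (hρ : 0 < ρ)
    (hH : DifferentiableOn ℂ H (ball (0 : ℂ) ρ))
    (hK : DifferentiableOn ℂ K (ball (0 : ℂ) ρ))
    (hH0re : 0 < (H 0).re) (hH0im : (H 0).im = 0) (hK0 : K 0 = Complex.I)
    (hid : ∃ δ > 0, δ ≤ ρ ∧ ∀ w : ℂ, 0 < ‖w‖ → ‖w‖ < δ →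
      (H w).im * ((K w).re ^ 2 - ‖w‖ ^ 2 * (K w).im ^ 2) +
        2 * (H w).re * (‖w‖ * (K w).re * (K w).im) = 0) :
    ∃ r > 0, ∀ w : ℂ, ‖w‖ < r → (K w).re = 0 ∧ (H w).im = 0 := by
  obtain ⟨δ, hδ, -, hδid⟩ := hid
  have hform : ∀ᶠ w in 𝓝[≠] 0, linesOfCurvatureForm (H w) (K w) ‖w‖ = 0 := by
    filter_upwards [nhdsWithin_le_nhds (ball_mem_nhds 0 hδ), self_mem_nhdsWithin] with w hw hw0
    exact hδid w (norm_pos_iff.mpr hw0) (mem_ball_zero_iff.mp hw)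
  suffices h : ∀ᶠ w in 𝓝 (0 : ℂ), (K w).re = 0 ∧ (H w).im = 0 by
    obtain ⟨r, hr, h⟩ := Metric.eventually_nhds_iff.mp h
    exact ⟨r, hr, fun w hw => h (by rwa [dist_zero_right])⟩
  by_cases hKI : ∀ᶠ w in 𝓝 0, K w = I
  · exact eventually_re_eq_zero_and_im_eq_zero_of_eventually_eq_I hKI hH0im hform
  exfalso
  set d := (H 0).re
  have hH0 : H 0 = d := Complex.ext rfl hH0im
  obtain ⟨n, hn, A, hA, hA0, hKA⟩ :=
    (hK.analyticAt (ball_mem_nhds 0 hρ)).exists_eventually_eq_add_pow_mul (by rwa [hK0])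
  simp only [hK0, sub_zero] at hKA
  by_cases hHd : ∀ᶠ w in 𝓝 0, H w = d
  · exact hA0 (leading_coeff_eq_zero_of_le (B := 0) hH0re.ne' hn le_rfl hA.continuousAt
      continuousAt_const hKA (hHd.mono fun w hw => by simp [hw]) hform)
  obtain ⟨m, hm, B, hB, hB0, hHB⟩ :=
    (hH.analyticAt (ball_mem_nhds 0 hρ)).exists_eventually_eq_add_pow_mul (by rwa [hH0])
  simp only [hH0, sub_zero] at hHB
  exact (leading_coeff_eq_zero hH0re.ne' hn hm hA.continuousAt hB.continuousAt hKA hHB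
    hform).elim hA0 hB0
end

section
/- Let f be holomorphic and not identically zero on a domain, with a zero of order m at an interior point p. Then the rotation index I(p) = −(1/4π)·Δ(arg f), where Δ(arg f) is the change in argument of f around a small loop about p, equals −m/2. In particular I(p) ≤ −1/2 at any interior zero. -/
open Metric Set Real

/-! Near `p` write `f = (z - p)^m g` with `g` holomorphic and zero-free on a small closed disc.
On the boundary circle the logarithmic derivative splits as `m/(z - p) + g'/g`; the first term
integrates to `2πi m`, and the second is holomorphic on the disc, so Cauchy's theorem kills it.
Hence `Δ arg f = 2πm` and the rotation index is `−m/2`. -/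

theorem DifferentiableOn.diffContOnCl_logDeriv_ball {V : Set ℂ} {g : ℂ → ℂ} {c : ℂ} {R : ℝ}
    (hV : IsOpen V) (hg : DifferentiableOn ℂ g V) (hsub : closedBall c R ⊆ V)
    (hg0 : ∀ z ∈ closedBall c R, g z ≠ 0) :
    DiffContOnCl ℂ (logDeriv g) (ball c R) := by
  have hdiff : DifferentiableOn ℂ (logDeriv g) (V ∩ g ⁻¹' {0}ᶜ) :=
    ((hg.deriv hV).mono inter_subset_left).div (hg.mono inter_subset_left) fun z hz ↦ hz.2
  exact hdiff.diffContOnCl_ball fun z hz ↦ ⟨hsub hz, hg0 z hz⟩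

theorem logDeriv_sub_pow_mul {𝕜 : Type*} [NontriviallyNormedField 𝕜] {g : 𝕜 → 𝕜} {c z : 𝕜}
    (m : ℕ) (hz : z ≠ c) (hg : DifferentiableAt 𝕜 g z) (hgz : g z ≠ 0) :
    logDeriv (fun w ↦ (w - c) ^ m * g w) z = m * (z - c)⁻¹ + logDeriv g z := by
  have hzc : z - c ≠ 0 := sub_ne_zero.2 hz
  rw [logDeriv_mul (f := fun w ↦ (w - c) ^ m) z (pow_ne_zero m hzc) hgz (by fun_prop) hg,
    logDeriv_fun_pow (by fun_prop), logDeriv_apply (· - c), deriv_sub_const, deriv_id'']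
  simp [div_eq_mul_inv]

theorem circleIntegral_logDeriv_of_eq_sub_pow_mul {V : Set ℂ} {f g : ℂ → ℂ} {c : ℂ} {R : ℝ}
    (m : ℕ) (hR : 0 < R) (hV : IsOpen V) (hsub : closedBall c R ⊆ V)
    (hg : DifferentiableOn ℂ g V) (hg0 : ∀ z ∈ closedBall c R, g z ≠ 0)
    (hf : ∀ z ∈ V, f z = (z - c) ^ m * g z) :
    (∮ z in C(c, R), logDeriv f z) = 2 * π * Complex.I * m := by
  have hlog : DiffContOnCl ℂ (logDeriv g) (ball c R) :=
    hg.diffContOnCl_logDeriv_ball hV hsub hg0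
  have hcenter : c ∉ sphere c R := by simp [hR.ne]
  have hsphere : EqOn (logDeriv f) (fun z ↦ m * (z - c)⁻¹ + logDeriv g z) (sphere c R) := by
    intro z hz
    have hzV : z ∈ V := hsub (sphere_subset_closedBall hz)
    have hfz : f =ᶠ[nhds z] fun w ↦ (w - c) ^ m * g w :=
      Filter.eventuallyEq_of_mem (hV.mem_nhds hzV) hf
    rw [(logDeriv_congr_nhds hfz).eq_of_nhds]
    exact logDeriv_sub_pow_mul m (ne_of_mem_of_not_mem hz hcenter)
      (hg.differentiableAt (hV.mem_nhds hzV)) (hg0 z (sphere_subset_closedBall hz))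
  have hpole : CircleIntegrable (fun z ↦ (m : ℂ) * (z - c)⁻¹) c R :=
    (circleIntegrable_sub_inv_iff.2 (Or.inr (by rwa [abs_of_pos hR]))).const_smul (a := (m : ℂ))
  calc (∮ z in C(c, R), logDeriv f z)
      = ∮ z in C(c, R), (m * (z - c)⁻¹ + logDeriv g z) :=
        circleIntegral.integral_congr hR.le hsphere
    _ = (∮ z in C(c, R), m * (z - c)⁻¹) + ∮ z in C(c, R), logDeriv g z :=
        circleIntegral.integral_add hpole
          (hlog.continuousOn_ball.mono sphere_subset_closedBall |>.circleIntegrable hR.le)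
    _ = 2 * π * Complex.I * m := by
        rw [circleIntegral.integral_const_mul, circleIntegral.integral_sub_inv_of_mem_ball
          (mem_ball_self hR), hlog.circleIntegral_eq_zero hR.le]
        ring

/-- Hopf's rotation-index formula: if `f` is holomorphic with a zero of order `m` at
an interior point `p`, then the change of argument of `f` around a small loop about
`p` is `2πm`, the rotation index `−(1/4π)·Δ(arg f)` equals `−m/2`, and in particular
it is at most `−1/2` when `m ≥ 1`. -/
theorem rotation_index_at_interior_zero
    (U : Set ℂ) (hU : IsOpen U) (p : ℂ) (hp : p ∈ U)
    (f g : ℂ → ℂ) (m : ℕ) (hm : 1 ≤ m)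
    (hg : DifferentiableOn ℂ g U) (hgp : g p ≠ 0)
    (hf : ∀ z ∈ U, f z = (z - p) ^ m * g z) :
    ∃ ε₀ > 0, ∀ ε : ℝ, 0 < ε → ε < ε₀ →
      (∮ z in C(p, ε), deriv f z / f z) = 2 * π * Complex.I * m ∧
      -(1 / (4 * π)) * (2 * π * (m : ℝ)) = -(m : ℝ) / 2 ∧
      -(m : ℝ) / 2 ≤ -(1 / 2 : ℝ) := by
  obtain ⟨ε₀, hε₀, hball⟩ := isOpen_iff.1
    (hg.continuousOn.isOpen_inter_preimage hU isOpen_compl_singleton) p ⟨hp, hgp⟩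
  refine ⟨ε₀, hε₀, fun ε hε hεε₀ ↦ ⟨?_, by field_simp; ring, ?_⟩⟩
  · have hsub := (closedBall_subset_ball hεε₀).trans hball
    exact circleIntegral_logDeriv_of_eq_sub_pow_mul m hε hU (hsub.trans inter_subset_left) hg
      (fun z hz ↦ (hsub hz).2) hf
  · have : (1 : ℝ) ≤ m := by exact_mod_cast hm
    linarith
end
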